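/- Let H be a finite dimensional quasi-Hopf algebra, μ ∈ H* the distinguished grouplike element defined by th = μ(h)t for t ∈ ∫ₗ, and E: H* → 𝓛 the Hausser-Nill projection onto the space of left cointegrals. Then for all h* ∈ H* and h ∈ H: E(h* ↽ S⁻¹(h)) = μ(h) E(h*), where (h* ↽ h)(h') = h*(hh'). -/

import Mathlib

set_option autoImplicit false

open TensorProduct

/-- A quasi-bialgebra in the sense of Drinfeld. The reassociator `Phi` lives in
`H ⊗ (H ⊗ H)`, and `(Δ ⊗ id)` is transported along the associator. -/
structure QuasiBialgebra (k H : Type*) [Field k] [Ring H] [Algebra k H] where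
  comul : H →ₐ[k] H ⊗[k] H
  counit : H →ₐ[k] k
  Phi : H ⊗[k] (H ⊗[k] H)
  PhiInv : H ⊗[k] (H ⊗[k] H)
  Phi_invertible : Phi * PhiInv = 1
  invertible_Phi : PhiInv * Phi = 1
  quasi_coassoc : ∀ h : H,
    (Algebra.TensorProduct.map (AlgHom.id k H) comul) (comul h) * Phi
      = Phi * (Algebra.TensorProduct.assoc k k k H H H)
          ((Algebra.TensorProduct.map comul (AlgHom.id k H)) (comul h))
  counit_right : ∀ h : H,
    (Algebra.TensorProduct.map (AlgHom.id k H) counit) (comul h) = h ⊗ₜ[k] 1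
  counit_left : ∀ h : H,
    (Algebra.TensorProduct.map counit (AlgHom.id k H)) (comul h) = 1 ⊗ₜ[k] h
  pentagon :
    (1 ⊗ₜ[k] Phi)
      * (Algebra.TensorProduct.map (AlgHom.id k H)
          ((Algebra.TensorProduct.assoc k k k H H H).toAlgHom.comp
            (Algebra.TensorProduct.map comul (AlgHom.id k H)))) Phi
      * (Algebra.TensorProduct.map (AlgHom.id k H)
            (Algebra.TensorProduct.assoc k k k H H H).toAlgHom)
          ((Algebra.TensorProduct.assoc k k k H (H ⊗[k] H) H) (Phi ⊗ₜ[k] 1))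
    = (Algebra.TensorProduct.map (AlgHom.id k H)
        (Algebra.TensorProduct.map (AlgHom.id k H) comul)) Phi
      * (Algebra.TensorProduct.assoc k k k H H (H ⊗[k] H))
          ((Algebra.TensorProduct.map comul (AlgHom.id k (H ⊗[k] H))) Phi)
  counit_mid_Phi :
    (Algebra.TensorProduct.map (AlgHom.id k H)
      (Algebra.TensorProduct.map counit (AlgHom.id k H))) Phi = 1

/-- A quasi-Hopf algebra: a quasi-bialgebra with an algebra anti-homomorphism `S`
and elements `alpha`, `beta` satisfying Drinfeld's antipode axioms.  Bijectivity
of `S` is *not* assumed. -/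
structure QuasiHopfAlgebra (k H : Type*) [Field k] [Ring H] [Algebra k H] extends
    QuasiBialgebra k H where
  S : H →ₗ[k] H
  alpha : H
  beta : H
  S_one : S 1 = 1
  S_mul : ∀ a b : H, S (a * b) = S b * S a
  antipode_left : ∀ h : H,
    (LinearMap.mul' k H)
      ((TensorProduct.map ((LinearMap.mulRight k alpha) ∘ₗ S) LinearMap.id) (comul h))
      = counit h • alpha
  antipode_right : ∀ h : H,
    (LinearMap.mul' k H)
      ((TensorProduct.map LinearMap.id ((LinearMap.mulLeft k beta) ∘ₗ S)) (comul h))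
      = counit h • beta
  antipode_Phi :
    (LinearMap.mul' k H)
      ((TensorProduct.map LinearMap.id
        ((LinearMap.mul' k H) ∘ₗ (TensorProduct.map
          ((LinearMap.mulRight k alpha) ∘ₗ ((LinearMap.mulLeft k beta) ∘ₗ S))
          LinearMap.id))) Phi) = 1
  antipode_PhiInv :
    (LinearMap.mul' k H)
      ((TensorProduct.map ((LinearMap.mulRight k alpha) ∘ₗ S)
        ((LinearMap.mul' k H) ∘ₗ (TensorProduct.map (LinearMap.mulRight k beta) S)))
        PhiInv) = 1

namespace QuasiHopfAlgebra

variable {k H : Type*} [Field k] [Ring H] [Algebra k H] (Q : QuasiHopfAlgebra k H)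

/-- The space of left integrals in `H`. -/
def leftIntegrals : Submodule k H where
  carrier := {t | ∀ h : H, h * t = Q.counit h • t}
  add_mem' := by intro a b ha hb h; rw [mul_add, ha h, hb h, smul_add]
  zero_mem' := by intro h; simp
  smul_mem' := by intro c x hx h; rw [mul_smul_comm, hx h, smul_comm]

/-- The space of right integrals in `H`. -/
def rightIntegrals : Submodule k H where
  carrier := {t | ∀ h : H, t * h = Q.counit h • t}
  add_mem' := by intro a b ha hb h; rw [add_mul, ha h, hb h, smul_add]
  zero_mem' := by intro h; simp
  smul_mem' := by intro c x hx h; rw [smul_mul_assoc, hx h, smul_comm]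

/-- The element `p_R = ∑ x¹ ⊗ x² β S(x³)`. -/
noncomputable def pR : H ⊗[k] H :=
  (TensorProduct.map LinearMap.id
    ((LinearMap.mul' k H) ∘ₗ (TensorProduct.map (LinearMap.mulRight k Q.beta) Q.S)))
    Q.PhiInv

/-- The element `∑ X¹ t₁ ⊗ S(X² t₂) α X³` built from a (left integral) `t`. -/
noncomputable def Tel (t : H) : H ⊗[k] H :=
  (TensorProduct.map LinearMap.id
    ((LinearMap.mul' k H) ∘ₗ
      (TensorProduct.map ((LinearMap.mulRight k Q.alpha) ∘ₗ Q.S) LinearMap.id)))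
    (Q.Phi * (Algebra.TensorProduct.assoc k k k H H H) (Q.comul t ⊗ₜ[k] 1))

end QuasiHopfAlgebra

namespace QuasiHopfAlgebra

variable {k H : Type*} [Field k] [Ring H] [Algebra k H] (Q : QuasiHopfAlgebra k H)

/-- The map `e ↦ ∑ X¹e₁ ⊗ β S(S(X²e₂) α X³)`. -/
noncomputable def Amap : H →ₗ[k] H ⊗[k] H :=
  (TensorProduct.map LinearMap.id
      ((LinearMap.mulLeft k Q.beta) ∘ₗ Q.S ∘ₗ (LinearMap.mul' k H) ∘ₗ
        (TensorProduct.map ((LinearMap.mulRight k Q.alpha) ∘ₗ Q.S) LinearMap.id))) ∘ₗ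
    (LinearMap.mulLeft k Q.Phi) ∘ₗ
    (Algebra.TensorProduct.assoc k k k H H H).toLinearMap ∘ₗ
    ((TensorProduct.mk k (H ⊗[k] H) H).flip 1) ∘ₗ
    Q.comul.toLinearMap

/-- The Panaite–Van Oystaeyen projection
`P(h) = ∑ᵢ ⟨eⁱ, β S(S(X²(eᵢ)₂) α X³) h⟩ X¹ (eᵢ)₁` onto the space of left
integrals, written via the coevaluation element `∑ᵢ eᵢ ⊗ eⁱ`. -/
noncomputable def P [FiniteDimensional k H] (h : H) : H :=
  (TensorProduct.rid k H)
    ((TensorProduct.map LinearMap.id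
        ((contractRight k H) ∘ₗ
          (TensorProduct.map (LinearMap.mulRight k h) LinearMap.id)))
      ((TensorProduct.assoc k H H (Module.Dual k H))
        ((TensorProduct.map Q.Amap LinearMap.id) (coevaluation k H 1))))

end QuasiHopfAlgebra

/-!
`E(h*)` evaluated at `h'` is `h*(S⁻¹(P(S h')))`, and `P` takes values in the left integrals, on
which right multiplication by `h` is multiplication by `μ(h)`; as `S⁻¹` is anti-multiplicative,
`S⁻¹(h) S⁻¹(P(S h')) = μ(h) S⁻¹(P(S h'))`.

That `P(x)` is a left integral is the computation of Panaite and Van Oystaeyen. `P(x)` is the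
partial trace of `e ↦ X¹e₁ ⊗ β S(S(X²e₂) α X³) x`. Quasi-coassociativity turns left
multiplication by `g` into `e ↦ g₁ e` on the input and a factor `S(g₂)` on the right leg; cyclicity
of the trace then moves `g₁` to the right leg as well, where `g₁ β S(g₂) = ε(g) β`.
-/

namespace TensorProduct

variable {k V W : Type*} [Field k] [AddCommGroup V] [Module k V] [FiniteDimensional k V]
  [AddCommGroup W] [Module k W]

variable (k V W) in
/-- For a basis `eᵢ` of `V` with dual basis `eⁱ`, `partialTrace M = ∑ᵢ (id ⊗ eⁱ) (M eᵢ)`. -/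
noncomputable def partialTrace : (V →ₗ[k] W ⊗[k] V) →ₗ[k] W where
  toFun M := TensorProduct.rid k W (map LinearMap.id (contractRight k V)
    (TensorProduct.assoc k W V (Module.Dual k V) (map M LinearMap.id (coevaluation k V 1))))
  map_add' M N := by simp [map_add_left]
  map_smul' c M := by simp [map_smul_left]

theorem partialTrace_apply (M : V →ₗ[k] W ⊗[k] V) :
    partialTrace k V W M = TensorProduct.rid k W (map LinearMap.id (contractRight k V)
      (TensorProduct.assoc k W V (Module.Dual k V) (map M LinearMap.id (coevaluation k V 1)))) :=
  rfl

theorem dual_apply_partialTrace (φ : Module.Dual k W) (M : V →ₗ[k] W ⊗[k] V) :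
    φ (partialTrace k V W M) =
      LinearMap.trace k V (TensorProduct.lid k V ∘ₗ φ.rTensor V ∘ₗ M) := by
  classical
  have contract (f : Module.Dual k V) (t : W ⊗[k] V) :
      φ (TensorProduct.rid k W (map LinearMap.id (contractRight k V)
        (TensorProduct.assoc k W V (Module.Dual k V) (t ⊗ₜ f)))) =
        f (TensorProduct.lid k V (φ.rTensor V t)) := by
    induction t using TensorProduct.induction_on with
    | zero => simp
    | tmul w v => simp [mul_comm]
    | add t t' ht ht' => simp only [add_tmul, map_add, ht, ht']
  rw [LinearMap.trace_eq_matrix_trace k (Module.Basis.ofVectorSpace k V), Matrix.trace]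
  simp [partialTrace, coevaluation_apply_one, contract, LinearMap.toMatrix_apply]

theorem partialTrace_ext {M N : V →ₗ[k] W ⊗[k] V}
    (h : ∀ φ : Module.Dual k W, LinearMap.trace k V (TensorProduct.lid k V ∘ₗ φ.rTensor V ∘ₗ M) =
      LinearMap.trace k V (TensorProduct.lid k V ∘ₗ φ.rTensor V ∘ₗ N)) :
    partialTrace k V W M = partialTrace k V W N :=
  Module.eval_apply_injective k <| LinearMap.ext fun φ => by
    simp only [Module.Dual.eval_apply, dual_apply_partialTrace, h]

theorem partialTrace_lTensor_comp (f : V →ₗ[k] V) (M : V →ₗ[k] W ⊗[k] V) :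
    partialTrace k V W (f.lTensor W ∘ₗ M) = partialTrace k V W (M ∘ₗ f) := by
  refine partialTrace_ext fun φ => ?_
  have hcomm : TensorProduct.lid k V ∘ₗ φ.rTensor V ∘ₗ f.lTensor W =
      f ∘ₗ TensorProduct.lid k V ∘ₗ φ.rTensor V := by
    ext w v; simp
  calc LinearMap.trace k V (TensorProduct.lid k V ∘ₗ φ.rTensor V ∘ₗ f.lTensor W ∘ₗ M)
      = LinearMap.trace k V (f ∘ₗ TensorProduct.lid k V ∘ₗ φ.rTensor V ∘ₗ M) := by
        exact congrArg (fun g => LinearMap.trace k V (g ∘ₗ M)) hcomm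
    _ = LinearMap.trace k V (TensorProduct.lid k V ∘ₗ φ.rTensor V ∘ₗ M ∘ₗ f) :=
        LinearMap.trace_comp_comm' _ _

theorem map_partialTrace {W' : Type*} [AddCommGroup W'] [Module k W'] (f : W →ₗ[k] W')
    (M : V →ₗ[k] W ⊗[k] V) :
    f (partialTrace k V W M) = partialTrace k V W' (f.rTensor V ∘ₗ M) :=
  Module.eval_apply_injective k <| LinearMap.ext fun φ => by
    simp only [Module.Dual.eval_apply, ← LinearMap.comp_apply φ f, dual_apply_partialTrace,
      LinearMap.rTensor_comp, LinearMap.comp_assoc]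

end TensorProduct

namespace QuasiHopfAlgebra

open LinearMap

variable {k H : Type*} [Field k] [Ring H] [Algebra k H] (Q : QuasiHopfAlgebra k H)

noncomputable def sAlpha : H ⊗[k] H →ₗ[k] H :=
  mul' k H ∘ₗ TensorProduct.map (mulRight k Q.alpha ∘ₗ Q.S) LinearMap.id

noncomputable def phiComul : H →ₗ[k] H ⊗[k] (H ⊗[k] H) :=
  mulLeft k Q.Phi ∘ₗ (Algebra.TensorProduct.assoc k k k H H H).toLinearMap ∘ₗ
    (TensorProduct.mk k (H ⊗[k] H) H).flip 1 ∘ₗ Q.comul.toLinearMap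

/-- The linear map underlying `Tel`. -/
noncomputable def telMap : H →ₗ[k] H ⊗[k] H :=
  Q.sAlpha.lTensor H ∘ₗ Q.phiComul

@[simp]
theorem sAlpha_tmul (a b : H) : Q.sAlpha (a ⊗ₜ b) = Q.S a * Q.alpha * b := by
  simp [sAlpha]

theorem phiComul_apply (e : H) :
    Q.phiComul e = Q.Phi * Algebra.TensorProduct.assoc k k k H H H (Q.comul e ⊗ₜ 1) :=
  rfl

theorem amap_eq : Q.Amap = (mulLeft k Q.beta ∘ₗ Q.S).lTensor H ∘ₗ Q.telMap := by
  rw [telMap, ← LinearMap.comp_assoc, ← lTensor_comp]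
  rfl

theorem sAlpha_mul_tmul (w : H ⊗[k] H) (u v : H) :
    Q.sAlpha (w * (u ⊗ₜ v)) = Q.S u * Q.sAlpha w * v := by
  induction w using TensorProduct.induction_on with
  | zero => simp
  | tmul a b => simp [Q.S_mul, mul_assoc]
  | add w w' hw hw' => rw [add_mul, map_add, hw, hw', map_add, mul_add, add_mul]

theorem sAlpha_comul_mul (g : H) (z : H ⊗[k] H) :
    Q.sAlpha (Q.comul g * z) = Q.counit g • Q.sAlpha z := by
  have hg : Q.sAlpha (Q.comul g) = Q.counit g • Q.alpha := Q.antipode_left g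
  induction z using TensorProduct.induction_on with
  | zero => simp
  | tmul u v => simp [sAlpha_mul_tmul, hg, mul_assoc]
  | add z z' hz hz' => rw [mul_add, map_add, hz, hz', map_add, smul_add]

theorem lTensor_sAlpha_tmul_comul_mul (a b : H) (Z : H ⊗[k] (H ⊗[k] H)) :
    Q.sAlpha.lTensor H ((a ⊗ₜ Q.comul b) * Z) =
      Q.counit b • ((a ⊗ₜ (1 : H)) * Q.sAlpha.lTensor H Z) := by
  induction Z using TensorProduct.induction_on with
  | zero => simp
  | tmul u z => simp [sAlpha_comul_mul, TensorProduct.tmul_smul]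
  | add Z Z' hZ hZ' => rw [mul_add, map_add, hZ, hZ', map_add, mul_add, smul_add]

theorem lTensor_sAlpha_comul_comul_mul (g : H) (Z : H ⊗[k] (H ⊗[k] H)) :
    Q.sAlpha.lTensor H (Algebra.TensorProduct.map (AlgHom.id k H) Q.comul (Q.comul g) * Z) =
      (g ⊗ₜ (1 : H)) * Q.sAlpha.lTensor H Z := by
  have key : ∀ w : H ⊗[k] H,
      Q.sAlpha.lTensor H (Algebra.TensorProduct.map (AlgHom.id k H) Q.comul w * Z) =
        (TensorProduct.rid k H (Algebra.TensorProduct.map (AlgHom.id k H) Q.counit w) ⊗ₜ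
          (1 : H)) * Q.sAlpha.lTensor H Z := by
    intro w
    induction w using TensorProduct.induction_on with
    | zero => simp
    | tmul a b =>
      simp [lTensor_sAlpha_tmul_comul_mul, ← TensorProduct.smul_tmul']
    | add w w' hw hw' => rw [map_add, add_mul, map_add, hw, hw', map_add, map_add, add_tmul, add_mul]
  rw [key, Q.counit_right, TensorProduct.rid_tmul, one_smul]

theorem lTensor_sAlpha_mul_one_tmul_one_tmul (Z : H ⊗[k] (H ⊗[k] H)) (d : H) :
    Q.sAlpha.lTensor H (Z * ((1 : H) ⊗ₜ ((1 : H) ⊗ₜ d))) =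
      (mulRight k d).lTensor H (Q.sAlpha.lTensor H Z) := by
  induction Z using TensorProduct.induction_on with
  | zero => simp
  | tmul a z => simp [sAlpha_mul_tmul, Q.S_one]
  | add Z Z' hZ hZ' => rw [add_mul, map_add, hZ, hZ', map_add, map_add]

theorem assoc_comul_tmul (c d : H) :
    Algebra.TensorProduct.assoc k k k H H H (Q.comul c ⊗ₜ d) =
      Algebra.TensorProduct.assoc k k k H H H (Q.comul c ⊗ₜ 1) * ((1 : H) ⊗ₜ ((1 : H) ⊗ₜ d)) := by
  have split : Q.comul c ⊗ₜ d = (Q.comul c ⊗ₜ (1 : H)) * ((1 : H ⊗[k] H) ⊗ₜ[k] d) := by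
    rw [Algebra.TensorProduct.tmul_mul_tmul, mul_one, one_mul]
  rw [split, map_mul, Algebra.TensorProduct.one_def, Algebra.TensorProduct.assoc_tmul]

theorem tmul_one_mul_telMap {g : H} {s : Finset (H × H)}
    (hs : Q.comul g = ∑ j ∈ s, j.1 ⊗ₜ j.2) (e : H) :
    (g ⊗ₜ (1 : H)) * Q.telMap e = ∑ j ∈ s, (mulRight k j.2).lTensor H (Q.telMap (j.1 * e)) := by
  calc (g ⊗ₜ (1 : H)) * Q.telMap e
      = Q.sAlpha.lTensor H
          (Algebra.TensorProduct.map (AlgHom.id k H) Q.comul (Q.comul g) * Q.phiComul e) := by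
        rw [telMap, LinearMap.comp_apply, lTensor_sAlpha_comul_comul_mul]
    _ = Q.sAlpha.lTensor H (Q.Phi * Algebra.TensorProduct.assoc k k k H H H
          (Algebra.TensorProduct.map Q.comul (AlgHom.id k H) (Q.comul g * (e ⊗ₜ 1)))) := by
        rw [phiComul_apply, ← mul_assoc, Q.quasi_coassoc, mul_assoc,
          ← map_mul (Algebra.TensorProduct.assoc k k k H H H),
          map_mul (Algebra.TensorProduct.map Q.comul (AlgHom.id k H)),
          Algebra.TensorProduct.map_tmul, map_one]
    _ = ∑ j ∈ s, (mulRight k j.2).lTensor H (Q.telMap (j.1 * e)) := by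
        simp only [hs, Finset.sum_mul, map_sum, Finset.mul_sum, Algebra.TensorProduct.tmul_mul_tmul,
          mul_one, Algebra.TensorProduct.map_tmul, AlgHom.id_apply]
        refine Finset.sum_congr rfl fun j _ => ?_
        rw [assoc_comul_tmul, ← mul_assoc, lTensor_sAlpha_mul_one_tmul_one_tmul]
        rfl

theorem rTensor_mulLeft_comp_amap {g : H} {s : Finset (H × H)}
    (hs : Q.comul g = ∑ j ∈ s, j.1 ⊗ₜ j.2) :
    (mulLeft k g).rTensor H ∘ₗ Q.Amap =
      ∑ j ∈ s, (mulLeft k Q.beta ∘ₗ Q.S ∘ₗ mulRight k j.2).lTensor H ∘ₗ Q.telMap ∘ₗ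
        mulLeft k j.1 := by
  have rTensor_eq (w : H ⊗[k] H) : (mulLeft k g).rTensor H w = (g ⊗ₜ (1 : H)) * w := by
    induction w using TensorProduct.induction_on with
    | zero => simp
    | tmul a b => simp
    | add w w' hw hw' => rw [map_add, hw, hw', mul_add]
  refine LinearMap.ext fun e => ?_
  have commute : (mulLeft k g).rTensor H ∘ₗ (mulLeft k Q.beta ∘ₗ Q.S).lTensor H =
      (mulLeft k Q.beta ∘ₗ Q.S).lTensor H ∘ₗ (mulLeft k g).rTensor H := by
    rw [LinearMap.rTensor_comp_lTensor, LinearMap.lTensor_comp_rTensor]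
  rw [amap_eq, ← LinearMap.comp_assoc, commute, LinearMap.comp_apply, LinearMap.comp_apply,
    rTensor_eq, tmul_one_mul_telMap Q hs, map_sum, LinearMap.sum_apply]
  refine Finset.sum_congr rfl fun j _ => ?_
  simp only [LinearMap.comp_apply, LinearMap.lTensor_comp, mulLeft_apply]

theorem sum_mul_beta_mul_S {g : H} {s : Finset (H × H)}
    (hs : Q.comul g = ∑ j ∈ s, j.1 ⊗ₜ j.2) :
    ∑ j ∈ s, j.1 * Q.beta * Q.S j.2 = Q.counit g • Q.beta := by
  rw [← Q.antipode_right g, hs]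
  simp [mul_assoc]

theorem sum_lTensor_mulLeft_comp {g : H} {s : Finset (H × H)}
    (hs : Q.comul g = ∑ j ∈ s, j.1 ⊗ₜ j.2) (x : H) :
    ∑ j ∈ s, (mulLeft k j.1 ∘ₗ mulRight k x ∘ₗ mulLeft k Q.beta ∘ₗ Q.S ∘ₗ
      mulRight k j.2).lTensor H =
        Q.counit g • (mulRight k x ∘ₗ mulLeft k Q.beta ∘ₗ Q.S).lTensor H := by
  refine TensorProduct.ext' fun a b => ?_
  simp only [LinearMap.sum_apply, LinearMap.lTensor_tmul, LinearMap.comp_apply, mulLeft_apply,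
    mulRight_apply, Q.S_mul, LinearMap.smul_apply, ← TensorProduct.tmul_sum,
    ← TensorProduct.tmul_smul]
  congr 1
  calc ∑ j ∈ s, j.1 * (Q.beta * (Q.S j.2 * Q.S b) * x)
      = (∑ j ∈ s, j.1 * Q.beta * Q.S j.2) * Q.S b * x := by
        simp only [Finset.sum_mul, mul_assoc]
    _ = Q.counit g • (Q.beta * Q.S b * x) := by
        rw [sum_mul_beta_mul_S Q hs, smul_mul_assoc, smul_mul_assoc]

variable [FiniteDimensional k H]

theorem P_eq_partialTrace (x : H) :
    Q.P x = partialTrace k H H ((mulRight k x).lTensor H ∘ₗ Q.Amap) := by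
  have contract : TensorProduct.map LinearMap.id (contractRight k H ∘ₗ
        TensorProduct.map (mulRight k x) LinearMap.id) ∘ₗ
        (TensorProduct.assoc k H H (Module.Dual k H)).toLinearMap =
      TensorProduct.map LinearMap.id (contractRight k H) ∘ₗ
        (TensorProduct.assoc k H H (Module.Dual k H)).toLinearMap ∘ₗ
        TensorProduct.map ((mulRight k x).lTensor H) LinearMap.id := by
    ext a b f
    simp
  have := LinearMap.congr_fun contract (TensorProduct.map Q.Amap LinearMap.id (coevaluation k H 1))
  simp only [LinearMap.comp_apply, LinearEquiv.coe_coe] at this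
  rw [P, partialTrace_apply, this, ← LinearMap.comp_apply (TensorProduct.map _ _),
    ← TensorProduct.map_comp, LinearMap.id_comp]

theorem mul_P (g x : H) : g * Q.P x = Q.counit g • Q.P x := by
  obtain ⟨s, hs⟩ := TensorProduct.exists_finset (Q.comul g)
  calc g * Q.P x
      = partialTrace k H H ((mulRight k x).lTensor H ∘ₗ (mulLeft k g).rTensor H ∘ₗ Q.Amap) := by
        rw [P_eq_partialTrace, ← mulLeft_apply (R := k), map_partialTrace, ← LinearMap.comp_assoc,
          LinearMap.rTensor_comp_lTensor, ← LinearMap.lTensor_comp_rTensor, LinearMap.comp_assoc]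
    _ = ∑ j ∈ s, partialTrace k H H ((mulRight k x).lTensor H ∘ₗ
          (mulLeft k Q.beta ∘ₗ Q.S ∘ₗ mulRight k j.2).lTensor H ∘ₗ Q.telMap ∘ₗ
          mulLeft k j.1) := by
        rw [rTensor_mulLeft_comp_amap Q hs, ← map_sum]
        congr 1
        ext
        simp [LinearMap.sum_apply]
    _ = ∑ j ∈ s, partialTrace k H H ((mulLeft k j.1 ∘ₗ mulRight k x ∘ₗ mulLeft k Q.beta ∘ₗ Q.S ∘ₗ
          mulRight k j.2).lTensor H ∘ₗ Q.telMap) := by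
        refine Finset.sum_congr rfl fun j _ => ?_
        rw [← LinearMap.comp_assoc, ← LinearMap.comp_assoc, ← partialTrace_lTensor_comp]
        simp only [LinearMap.lTensor_comp, LinearMap.comp_assoc]
    _ = Q.counit g • Q.P x := by
        rw [← map_sum, P_eq_partialTrace, amap_eq, ← map_smul, ← LinearMap.comp_assoc,
          ← LinearMap.lTensor_comp, ← LinearMap.smul_comp, ← sum_lTensor_mulLeft_comp Q hs]
        congr 1
        ext
        simp [LinearMap.sum_apply]

theorem P_mem_leftIntegrals (x : H) : Q.P x ∈ Q.leftIntegrals := fun g => Q.mul_P g x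

end QuasiHopfAlgebra

/-- Evaluated at `h'`, the two sides are `⟨E(f ↽ S⁻¹(h)), h'⟩` and `μ(h) ⟨E(f), h'⟩`. -/
theorem cointegral_projection_modular {k H : Type*} [Field k] [Ring H] [Algebra k H]
    [FiniteDimensional k H] (Q : QuasiHopfAlgebra k H)
    (Sinv : H →ₗ[k] H) (hS1 : ∀ a, Sinv (Q.S a) = a) (hS2 : ∀ a, Q.S (Sinv a) = a)
    (μ : H →ₐ[k] k) (hμ : ∀ t ∈ Q.leftIntegrals, ∀ h : H, t * h = μ h • t) :
    ∀ (f : Module.Dual k H) (h h' : H),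
      f (Sinv h * Sinv (Q.P (Q.S h'))) = μ h * f (Sinv (Q.P (Q.S h'))) := by
  intro f h h'
  set t := Q.P (Q.S h')
  have ht : t * h = μ h • t := hμ t (Q.P_mem_leftIntegrals _) h
  have Sinv_mul : Sinv h * Sinv t = Sinv (t * h) := by
    rw [← hS1 (Sinv h * Sinv t), Q.S_mul, hS2, hS2]
  rw [Sinv_mul, ht, map_smul, map_smul, smul_eq_mul]
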